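/- Let μ : M → N be a crossed module and Nerₖ = Mᵏ × N. Each face map dᵢ : Nerₖ → Ner_{k-1} (given by d₀(m_k,…,m₁,n) = (m_k,…,m₂, μ(m₁)·n), dᵢ(m_k,…,m₁,n) = (m_k,…,m_{i+1}·mᵢ,…,m₁,n) for 0 < i < k, d_k(m_k,…,m₁,n) = (m_{k-1},…,m₁,n)) is a group homomorphism for the product ((mᵢ),n)·((m'ᵢ),n') = ((mᵢ · ^{μ(m_{i-1}⋯m₁)·n} m'ᵢ), n·n'). -/
import Mathlib

/-- `nᵢ`-component `μ(m_{i-1}⋯m₁)·n` of the chain `(m_k,…,m₁,n)`. -/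
def nerveExp {M N : Type*} [Group M] [Group N] (μ : M →* N) {k : ℕ}
    (f : Fin k → M) (n : N) (i : Fin k) : N :=
  ((List.ofFn (fun j : Fin i.val => μ (f ⟨j.val, j.isLt.trans i.isLt⟩))).reverse).prod * n

/-- The group law on `Nerₖ = Mᵏ × N`:
`((mᵢ), n)·((m'ᵢ), n') = ((mᵢ · ^{μ(m_{i-1}⋯m₁)·n} m'ᵢ), n·n')`. -/
def nerveMul {M N : Type*} [Group M] [Group N] (μ : M →* N) (ρ : N →* MulAut M) (k : ℕ)
    (p q : (Fin k → M) × N) : (Fin k → M) × N :=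
  (fun i => p.1 i * ρ (nerveExp μ p.1 p.2 i) (q.1 i), p.2 * q.2)

/-- The face map `dᵢ : Nerₖ₊₁ → Nerₖ`:
`d₀(m_{k+1},…,m₁,n) = (m_{k+1},…,m₂, μ(m₁)·n)`,
`dᵢ` multiplies the entries `m_{i+1}·m_i` for `0 < i < k+1`, `d_{k+1}` drops `m_{k+1}`. -/
def nerveFace {M N : Type*} [Group M] [Group N] (μ : M →* N) (k i : ℕ)
    (p : (Fin (k + 1) → M) × N) : (Fin k → M) × N :=
  if i = 0 then (fun j => p.1 j.succ, μ (p.1 0) * p.2)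
  else (fun j =>
    if j.val + 1 = i then p.1 j.succ * p.1 j.castSucc
    else if j.val + 1 < i then p.1 j.castSucc
    else p.1 j.succ, p.2)

section Aux

variable {M N : Type*} [Group M] [Group N]

/-- Recursive version of `nerveExp` on ℕ. -/
def expAux (μ : M →* N) (g : ℕ → M) (n : N) : ℕ → N
  | 0 => n
  | a + 1 => μ (g a) * expAux μ g n a

theorem expAux_succ (μ : M →* N) (g : ℕ → M) (n : N) (a : ℕ) :
    expAux μ g n (a + 1) = μ (g a) * expAux μ g n a := rfl

theorem expAux_congr (μ : M →* N) {g g' : ℕ → M} (n : N) {a : ℕ}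
    (h : ∀ l, l < a → g l = g' l) : expAux μ g n a = expAux μ g' n a := by
  induction a with
  | zero => rfl
  | succ a ih =>
    rw [expAux_succ, expAux_succ, h a (Nat.lt_succ_self a),
      ih (fun l hl => h l (hl.trans (Nat.lt_succ_self a)))]

theorem nerveExp_eq (μ : M →* N) {k : ℕ} (f : Fin k → M) (n : N) (i : Fin k) :
    nerveExp μ f n i = expAux μ (fun j => if h : j < k then f ⟨j, h⟩ else 1) n i.val := by
  obtain ⟨a, ha⟩ := i
  induction a with
  | zero => simp [nerveExp, expAux]
  | succ a ih =>
    have ha' : a < k := Nat.lt_of_succ_lt ha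
    have hh := ih ha'
    rw [nerveExp] at hh ⊢
    rw [List.ofFn_succ', List.concat_eq_append, List.reverse_append]
    simp only [List.reverse_singleton, List.singleton_append, List.prod_cons, Function.comp]
    rw [expAux_succ, dif_pos ha', mul_assoc]
    congr 1

theorem expAux_shift (μ : M →* N) (g g' : ℕ → M) (n : N) (c : M) (hc : c = g 0) :
    ∀ a, (∀ l, l < a → g' l = g (l + 1)) →
      expAux μ g' (μ c * n) a = expAux μ g n (a + 1) := by
  intro a
  induction a with
  | zero => intro _; rw [hc]; rfl
  | succ a ih =>
    intro h
    rw [expAux_succ, h a (Nat.lt_succ_self a),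
      ih (fun l hl => h l (hl.trans (Nat.lt_succ_self a))), expAux_succ (a := a + 1)]

theorem expAux_face (μ : M →* N) (g g' : ℕ → M) (n : N) (m : ℕ) :
    ∀ a, m < a →
    (∀ l, l < m → g' l = g l) → (g' m = g (m + 1) * g m) →
    (∀ l, m < l → l < a → g' l = g (l + 1)) →
    expAux μ g' n a = expAux μ g n (a + 1) := by
  intro a
  induction a with
  | zero => intro h; exact absurd h (Nat.not_lt_zero m)
  | succ a ih =>
    intro ha h1 h2 h3
    rcases Nat.lt_or_ge m a with hma | hma
    · rw [expAux_succ, h3 a hma (Nat.lt_succ_self a),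
        ih hma h1 h2 (fun l hl hl' => h3 l hl (hl'.trans (Nat.lt_succ_self a))),
        expAux_succ (a := a + 1)]
    · have hma' : m = a := Nat.le_antisymm (Nat.lt_succ_iff.mp ha) hma
      subst hma'
      rw [expAux_succ, h2, map_mul, expAux_congr μ n h1, mul_assoc,
        ← expAux_succ, ← expAux_succ]

end Aux

/-- For a crossed module `μ : M → N`, each face map `dᵢ : Ner_{k+1} → Nerₖ` of the nerve
of the associated categorical group is a group homomorphism. -/
theorem crossedModule_nerve_face_hom {M N : Type*} [Group M] [Group N]
    (μ : M →* N) (ρ : N →* MulAut M)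
    (h1 : ∀ (n : N) (m : M), μ (ρ n m) = n * μ m * n⁻¹)
    (h2 : ∀ m m' : M, ρ (μ m) m' = m * m' * m⁻¹) :
    ∀ (k i : ℕ), i ≤ k + 1 →
      ∀ p q : (Fin (k + 1) → M) × N,
        nerveFace μ k i (nerveMul μ ρ (k + 1) p q) =
          nerveMul μ ρ k (nerveFace μ k i p) (nerveFace μ k i q) := by
  intro k i hi p q
  set gp : ℕ → M := fun j => if h : j < k + 1 then p.1 ⟨j, h⟩ else 1 with hgp
  have hcs : ∀ (l : ℕ) (h : l < k), p.1 (Fin.castSucc ⟨l, h⟩) = gp l := by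
    intro l h
    rw [hgp]
    simp only [Nat.lt_succ_of_lt h, dif_pos]
    rfl
  have hs : ∀ (l : ℕ) (h : l < k), p.1 (Fin.succ ⟨l, h⟩) = gp (l + 1) := by
    intro l h
    rw [hgp]
    simp only [Nat.succ_lt_succ h, dif_pos]
    rfl
  have hgp0 : p.1 0 = gp 0 := by
    rw [hgp]
    simp only [Nat.succ_pos, dif_pos]
    congr 1
  by_cases hi0 : i = 0
  · subst hi0
    rw [nerveFace, nerveFace, nerveFace, nerveMul, nerveMul, if_pos rfl, if_pos rfl, if_pos rfl]
    refine Prod.ext ?_ ?_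
    · funext j
      simp only
      have hE : nerveExp μ (fun j : Fin k => p.1 j.succ) (μ (p.1 0) * p.2) j
          = nerveExp μ p.1 p.2 j.succ := by
        rw [nerveExp_eq, nerveExp_eq, Fin.val_succ]
        refine expAux_shift μ gp _ p.2 (p.1 0) hgp0 j.val ?_
        intro l hl
        have hlk : l < k := hl.trans j.isLt
        rw [dif_pos hlk, hs l hlk]
      rw [hE]
    · simp only
      have hE0 : nerveExp μ p.1 p.2 0 = p.2 := by
        rw [nerveExp_eq, Fin.val_zero]
        rfl
      rw [hE0, map_mul, h1]
      group
  · obtain ⟨m, rfl⟩ : ∃ m, i = m + 1 :=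
      ⟨i - 1, (Nat.succ_pred_eq_of_pos (Nat.pos_of_ne_zero hi0)).symm⟩
    rw [nerveFace, nerveFace, nerveFace, nerveMul, nerveMul, if_neg hi0, if_neg hi0, if_neg hi0]
    refine Prod.ext ?_ rfl
    funext j
    simp only
    have hjk := j.isLt
    have hEjc : nerveExp μ p.1 p.2 j.castSucc = expAux μ gp p.2 j.val := by
      rw [nerveExp_eq, Fin.coe_castSucc, ← hgp]
    have hEjs : nerveExp μ p.1 p.2 j.succ = μ (p.1 j.castSucc) * expAux μ gp p.2 j.val := by
      rw [nerveExp_eq, Fin.val_succ, ← hgp, expAux_succ, ← hcs j.val hjk]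
    have hEc : j.val ≤ m → nerveExp μ
        (fun j : Fin k => if j.val + 1 = m + 1 then p.1 j.succ * p.1 j.castSucc
          else if j.val + 1 < m + 1 then p.1 j.castSucc else p.1 j.succ) p.2 j
        = expAux μ gp p.2 j.val := by
      intro hjm
      rw [nerveExp_eq]
      exact expAux_congr μ p.2 (fun l hl => by
        have hlk : l < k := hl.trans j.isLt
        rw [dif_pos hlk]
        simp only [Fin.val_mk] -- FIX1
        rw [if_neg (by omega), if_pos (by omega), hcs l hlk])
    rcases Nat.lt_trichotomy (j.val + 1) (m + 1) with hlt | heq | hgt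
    · rw [if_neg (by omega), if_pos hlt, if_neg (by omega), if_pos hlt,
        if_neg (by omega), if_pos hlt, hEc (by omega), hEjc]
    · rw [if_pos heq, if_pos heq, if_pos heq, hEc (by omega), hEjc, hEjs,
        map_mul ρ, MulAut.mul_apply, h2, map_mul]
      group
    · rw [if_neg (by omega), if_neg (by omega), if_neg (by omega), if_neg (by omega),
        if_neg (by omega), if_neg (by omega), hEjs]
      have hEf : nerveExp μ
          (fun j : Fin k => if j.val + 1 = m + 1 then p.1 j.succ * p.1 j.castSucc
            else if j.val + 1 < m + 1 then p.1 j.castSucc else p.1 j.succ) p.2 j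
          = expAux μ gp p.2 (j.val + 1) := by
        rw [nerveExp_eq]
        refine expAux_face μ gp _ p.2 m j.val (by omega) ?_ ?_ ?_
        · intro l hl
          have hlk : l < k := by omega
          rw [dif_pos hlk]
          simp only [Fin.val_mk]
          rw [if_neg (by omega), if_pos (by omega), hcs l hlk]
        · have hmk : m < k := by omega
          rw [dif_pos hmk]
          simp only [Fin.val_mk]
          simp only [if_true]
          rw [hcs m hmk, hs m hmk]
        · intro l hl hl'
          have hlk : l < k := by omega
          rw [dif_pos hlk]
          simp only [Fin.val_mk]
          rw [if_neg (by omega), if_neg (by omega), hs l hlk]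
      rw [hEf, expAux_succ, ← hcs j.val hjk]
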